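/- Let Bip(H) be a connected bipartite graph with ribbon structure and basis, and T a Jaeger tree. If ev ∈ T with e an emerald node in the base component of T − ev (the component containing b₀), then for every emerald node f not in the base component, the tour of T reaches f strictly after it first reaches e; that is, f >_h e in the induced order. -/

import Mathlib

variable {V E : Type*} [Fintype V] [Fintype E] [DecidableEq V] [DecidableEq E]

/-- The edge of the bipartite graph `Bip H` corresponding to an incidence `(e, v)`,
as an unordered pair of nodes in `V ⊕ E` (violet nodes `Sum.inl v`, emerald nodes
`Sum.inr e`). -/
def bipSym2 (p : E × V) : Sym2 (V ⊕ E) := s(Sum.inl p.2, Sum.inr p.1)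

/-- The underlying bipartite graph of the hypergraph with incidence relation `inc`. -/
def bipGraph (inc : E → V → Prop) : SimpleGraph (V ⊕ E) :=
  SimpleGraph.fromEdgeSet (bipSym2 '' {p | inc p.1 p.2})

/-- `T` is (the edge set of) a spanning tree of the bipartite graph `Bip H` of the
hypergraph with incidence relation `inc`. -/
def IsSpanningTreeB (inc : E → V → Prop) (T : Finset (E × V)) : Prop :=
  (∀ p ∈ T, inc p.1 p.2) ∧
    (SimpleGraph.fromEdgeSet (↑(T.image bipSym2) : Set (Sym2 (V ⊕ E)))).IsTree

/-- The spanning tree `T` of `Bip H` represents the vector `h : E → ℤ`, i.e. `T` has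
degree `h e + 1` at each emerald node `e`. -/
def Represents (T : Finset (E × V)) (h : E → ℤ) : Prop :=
  ∀ e : E, ((T.filter (fun p => p.1 = e)).card : ℤ) = h e + 1

/-- `h` is a hypertree of the hypergraph with incidence relation `inc`. -/
def IsHypertree (inc : E → V → Prop) (h : E → ℤ) : Prop :=
  ∃ T : Finset (E × V), IsSpanningTreeB inc T ∧ Represents T h

/-- The edge `p` of `Bip H` is incident to the node `n`. -/
def IncTo (p : E × V) (n : V ⊕ E) : Prop := n = Sum.inl p.2 ∨ n = Sum.inr p.1

/-- A ribbon structure on the bipartite graph with incidence relation `inc`: at each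
node, a cyclic permutation of the incident edges. -/
structure Ribbon (inc : E → V → Prop) where
  /-- the edge following `p` at the node `n` -/
  next : (V ⊕ E) → (E × V) → (E × V)
  next_mem : ∀ n p, inc p.1 p.2 → IncTo p n →
    inc (next n p).1 (next n p).2 ∧ IncTo (next n p) n
  cyclic : ∀ n p q, inc p.1 p.2 → IncTo p n → inc q.1 q.2 → IncTo q n →
    ∃ k : ℕ, (next n)^[k] p = q

/-- The endpoint of the edge `p` other than `n`. -/
def otherEnd (n : V ⊕ E) (p : E × V) : V ⊕ E :=
  if n = Sum.inr p.1 then Sum.inl p.2 else Sum.inr p.1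

variable {inc : E → V → Prop}

/-- One step of the tour of the spanning tree `T`: from the node-edge pair `(x, xy)`,
move to `(y, yx⁺)` if `xy ∈ T` and to `(x, xy⁺)` if `xy ∉ T`. -/
def tourStep (R : Ribbon inc) (T : Finset (E × V)) (s : (V ⊕ E) × (E × V)) :
    (V ⊕ E) × (E × V) :=
  if s.2 ∈ T then (otherEnd s.1 s.2, R.next (otherEnd s.1 s.2) s.2)
  else (s.1, R.next s.1 s.2)

/-- The current node-edge pair of the tour of `T` (started at the basis `bas`)
after `k` steps. -/
def tourState (R : Ribbon inc) (T : Finset (E × V)) (bas : (V ⊕ E) × (E × V))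
    (k : ℕ) : (V ⊕ E) × (E × V) :=
  (tourStep R T)^[k] bas

/-- `bas = (b₀, b₀b₁)` is a valid basis: `b₀b₁` is an edge of `Bip H` incident
to the node `b₀`. -/
def IsBasis (bas : (V ⊕ E) × (E × V)) : Prop :=
  inc bas.2.1 bas.2.2 ∧ IncTo bas.2 bas.1

/-- `T` is a Jaeger tree: a spanning tree in whose tour every non-tree edge is first
seen at its emerald endpoint. -/
def IsJaeger (R : Ribbon inc) (bas : (V ⊕ E) × (E × V)) (T : Finset (E × V)) : Prop :=
  IsSpanningTreeB inc T ∧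
    ∀ p : E × V, inc p.1 p.2 → p ∉ T →
      ∃ k : ℕ, tourState R T bas k = (Sum.inr p.1, p) ∧
        ∀ j ≤ k, tourState R T bas j ≠ (Sum.inl p.2, p)

/-- The tour of `T` first reaches the node `n` (strictly) before it first reaches
the node `m`. -/
def reachedBefore (R : Ribbon inc) (T : Finset (E × V)) (bas : (V ⊕ E) × (E × V))
    (n m : V ⊕ E) : Prop :=
  ∃ k : ℕ, (tourState R T bas k).1 = n ∧ ∀ j ≤ k, (tourState R T bas j).1 ≠ m

/-- The order `<_h` on hyperedges: `e <_h f` if the tour of the Jaeger tree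
representing `h` reaches `e` before `f`. -/
def emLt (R : Ribbon inc) (bas : (V ⊕ E) × (E × V)) (h : E → ℤ) (e f : E) : Prop :=
  ∃ T : Finset (E × V), IsJaeger R bas T ∧ Represents T h ∧
    reachedBefore R T bas (Sum.inr e) (Sum.inr f)

/-- `e` is internally embedding active for the hypertree `h`. -/
def IntEmActive (R : Ribbon inc) (bas : (V ⊕ E) × (E × V)) (h : E → ℤ) (e : E) :
    Prop :=
  ∀ f : E, emLt R bas h f e →
    ¬ IsHypertree inc (fun x => h x - (if x = e then 1 else 0) + (if x = f then 1 else 0))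

/-- `e` is externally embedding active for the hypertree `h`. -/
def ExtEmActive (R : Ribbon inc) (bas : (V ⊕ E) × (E × V)) (h : E → ℤ) (e : E) :
    Prop :=
  ∀ f : E, emLt R bas h f e →
    ¬ IsHypertree inc (fun x => h x + (if x = e then 1 else 0) - (if x = f then 1 else 0))

/-- The embedding Crapo interval of the hypertree `h`. -/
def CrapoEm (R : Ribbon inc) (bas : (V ⊕ E) × (E × V)) (h : E → ℤ) : Set (E → ℤ) :=
  {y | ∀ e : E, (h e < y e → ExtEmActive R bas h e) ∧
    (y e < h e → IntEmActive R bas h e)}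

/-- The first difference between the tours of `T` and `T'` is at the node-edge
pair `s`. -/
def FirstDiffAt (R : Ribbon inc) (T T' : Finset (E × V)) (bas : (V ⊕ E) × (E × V))
    (s : (V ⊕ E) × (E × V)) : Prop :=
  ∃ k : ℕ, (∀ j ≤ k, tourState R T bas j = tourState R T' bas j) ∧
    tourState R T bas k = s ∧
    tourState R T bas (k + 1) ≠ tourState R T' bas (k + 1)

/-- `n` is a node of the fundamental cycle `C(T, p)` of the non-tree edge `p`:
it is an endpoint of `p` or of a tree edge whose exchange with `p` again gives a
spanning tree. -/
def NodeOnFundCycle (inc : E → V → Prop) (T : Finset (E × V)) (p : E × V)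
    (n : V ⊕ E) : Prop :=
  IncTo p n ∨ ∃ q ∈ T, IncTo q n ∧ IsSpanningTreeB inc (insert p (T.erase q))

section BernardiTourAux

set_option linter.unusedSectionVars false

open Function

lemma bipSym2_inj : Function.Injective (bipSym2 (E := E) (V := V)) := by
  rintro ⟨e, v⟩ ⟨e', v'⟩ h
  simp only [bipSym2, Sym2.eq_iff, Sum.inl.injEq, Sum.inr.injEq] at h
  rcases h with ⟨h1, h2⟩ | ⟨h1, h2⟩
  · simp [h1, h2]
  · exact absurd h1 (by simp)

lemma incTo_otherEnd (n : V ⊕ E) (q : E × V) : IncTo q (otherEnd n q) := by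
  unfold otherEnd
  split
  · exact Or.inl rfl
  · exact Or.inr rfl

lemma otherEnd_ne (n : V ⊕ E) (q : E × V) : otherEnd n q ≠ n := by
  unfold otherEnd
  split
  · rename_i h
    rw [h]
    simp
  · rename_i h
    exact fun he => h he.symm

lemma otherEnd_otherEnd (q : E × V) {n : V ⊕ E} (h : IncTo q n) :
    otherEnd (otherEnd n q) q = n := by
  rcases h with h | h <;> subst h <;> simp [otherEnd]

lemma sym2_otherEnd (q : E × V) {n : V ⊕ E} (h : IncTo q n) :
    s(n, otherEnd n q) = bipSym2 q := by
  rcases h with h | h <;> subst h <;> simp [otherEnd, bipSym2, Sym2.eq_iff]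

lemma bipSym2_eq_iff {q : E × V} {a b : V ⊕ E} (h : bipSym2 q = s(a, b)) :
    (a = Sum.inl q.2 ∧ b = Sum.inr q.1) ∨ (a = Sum.inr q.1 ∧ b = Sum.inl q.2) := by
  rw [bipSym2, Sym2.eq_iff] at h
  rcases h with ⟨h1, h2⟩ | ⟨h1, h2⟩
  · exact Or.inl ⟨h1.symm, h2.symm⟩
  · exact Or.inr ⟨h2.symm, h1.symm⟩

/-- Validity of a tour state. -/
def ValidS (inc : E → V → Prop) (s : (V ⊕ E) × (E × V)) : Prop :=
  inc s.2.1 s.2.2 ∧ IncTo s.2 s.1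

variable {inc : E → V → Prop}

lemma validS_step (R : Ribbon inc) (T : Finset (E × V)) {s : (V ⊕ E) × (E × V)}
    (h : ValidS inc s) : ValidS inc (tourStep R T s) := by
  unfold tourStep
  split
  · exact R.next_mem (otherEnd s.1 s.2) s.2 h.1 (incTo_otherEnd _ _)
  · exact R.next_mem s.1 s.2 h.1 h.2

lemma validS_iter (R : Ribbon inc) (T : Finset (E × V)) {bas : (V ⊕ E) × (E × V)}
    (h : ValidS inc bas) (k : ℕ) : ValidS inc ((tourStep R T)^[k] bas) := by
  induction k with
  | zero => exact h
  | succ k ih =>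
    rw [Function.iterate_succ_apply']
    exact validS_step R T ih

lemma next_inj (R : Ribbon inc) {n : V ⊕ E} {e e' : E × V}
    (he : inc e.1 e.2) (hie : IncTo e n) (he' : inc e'.1 e'.2) (hie' : IncTo e' n)
    (h : R.next n e = R.next n e') : e = e' := by
  obtain ⟨hne, hni⟩ := R.next_mem n e he hie
  obtain ⟨hne', hni'⟩ := R.next_mem n e' he' hie'
  obtain ⟨k, hk⟩ := R.cyclic n (R.next n e) e hne hni he hie
  obtain ⟨k', hk'⟩ := R.cyclic n (R.next n e') e' hne' hni' he' hie'
  have hee : (R.next n)^[k + 1] e' = e := by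
    rw [Function.iterate_succ_apply, ← h, hk]
  have hper' : (R.next n)^[k' + 1] e' = e' := by
    rw [Function.iterate_succ_apply, hk']
  have hper : (R.next n)^[k' + 1] e = e := by
    conv_lhs => rw [← hee, ← Function.iterate_add_apply]
    rw [Nat.add_comm (k' + 1) (k + 1), Function.iterate_add_apply, hper', hee]
  calc e = (R.next n)^[k' + 1] e := hper.symm
    _ = (R.next n)^[k'] (R.next n e) := Function.iterate_succ_apply _ _ _
    _ = (R.next n)^[k'] (R.next n e') := by rw [h]
    _ = e' := hk'

lemma step_inj (R : Ribbon inc) (T : Finset (E × V)) {s s' : (V ⊕ E) × (E × V)}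
    (hs : ValidS inc s) (hs' : ValidS inc s')
    (h : tourStep R T s = tourStep R T s') : s = s' := by
  obtain ⟨x, e⟩ := s
  obtain ⟨x', e'⟩ := s'
  have hstep : ∀ (z : V ⊕ E) (w : E × V), tourStep R T (z, w) =
      ((if w ∈ T then otherEnd z w else z),
        R.next (if w ∈ T then otherEnd z w else z) w) := by
    intro z w
    by_cases hw : w ∈ T <;> simp [tourStep, hw]
  rw [hstep, hstep] at h
  have h1 : (if e ∈ T then otherEnd x e else x) = (if e' ∈ T then otherEnd x' e' else x') :=
    congrArg Prod.fst h
  have h2 := congrArg Prod.snd h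
  simp only at h1 h2
  rw [← h1] at h2
  have hIm : IncTo e (if e ∈ T then otherEnd x e else x) := by
    split
    · exact incTo_otherEnd _ _
    · exact hs.2
  have hIm' : IncTo e' (if e' ∈ T then otherEnd x' e' else x') := by
    split
    · exact incTo_otherEnd _ _
    · exact hs'.2
  rw [← h1] at hIm'
  have he2 : e = e' := next_inj R hs.1 hIm hs'.1 hIm' h2
  subst he2
  by_cases ht : e ∈ T
  · rw [if_pos ht, if_pos ht] at h1
    have hx : x = x' := by
      have h3 := congrArg (fun z => otherEnd z e) h1
      rw [otherEnd_otherEnd e (show IncTo e x from hs.2),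
        otherEnd_otherEnd e (show IncTo e x' from hs'.2)] at h3
      exact h3
    rw [hx]
  · rw [if_neg ht, if_neg ht] at h1
    rw [h1]

lemma exists_period (R : Ribbon inc) (T : Finset (E × V)) {bas : (V ⊕ E) × (E × V)}
    (hb : ValidS inc bas) : ∃ n, 0 < n ∧ (tourStep R T)^[n] bas = bas := by
  have hcancel : ∀ (i : ℕ) (s s' : (V ⊕ E) × (E × V)), ValidS inc s → ValidS inc s' →
      (tourStep R T)^[i] s = (tourStep R T)^[i] s' → s = s' := by
    intro i
    induction i with
    | zero => intro s s' _ _ h; exact h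
    | succ i ih =>
      intro s s' hs hs' h
      rw [Function.iterate_succ_apply, Function.iterate_succ_apply] at h
      exact step_inj R T hs hs'
        (ih _ _ (validS_step R T hs) (validS_step R T hs') h)
  have key : ∀ i j : ℕ, i < j → (tourStep R T)^[i] bas = (tourStep R T)^[j] bas →
      ∃ n, 0 < n ∧ (tourStep R T)^[n] bas = bas := by
    intro i j hlt he
    refine ⟨j - i, by omega, ?_⟩
    have hj : j = i + (j - i) := by omega
    rw [hj, Function.iterate_add_apply] at he
    exact hcancel i _ _ (validS_iter R T hb _) hb he.symm
  obtain ⟨i, j, hne, heq⟩ :=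
    Finite.exists_ne_map_eq_of_infinite (fun k : ℕ => (tourStep R T)^[k] bas)
  rcases lt_or_gt_of_ne hne with hlt | hlt
  · exact key i j hlt heq
  · exact key j i hlt heq.symm

lemma cross_step (R : Ribbon inc) (T : Finset (E × V)) (q : E × V) (S : Set (V ⊕ E))
    (hS : ∀ a b,
      (SimpleGraph.fromEdgeSet (↑((T.erase q).image bipSym2) : Set (Sym2 (V ⊕ E)))).Adj a b →
      a ∈ S → b ∈ S)
    {s : (V ⊕ E) × (E × V)} (hs : ValidS inc s)
    (h1 : s.1 ∈ S) (h2 : (tourStep R T s).1 ∉ S) :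
    s.2 = q ∧ s.2 ∈ T ∧ (tourStep R T s).1 = otherEnd s.1 q := by
  by_cases hmem : s.2 ∈ T
  · have hnode : (tourStep R T s).1 = otherEnd s.1 s.2 := by
      unfold tourStep
      rw [if_pos hmem]
    by_cases heq : s.2 = q
    · exact ⟨heq, hmem, by rw [hnode, heq]⟩
    · exfalso
      apply h2
      rw [hnode]
      refine hS _ _ ?_ h1
      rw [SimpleGraph.fromEdgeSet_adj]
      refine ⟨?_, (otherEnd_ne s.1 s.2).symm⟩
      rw [sym2_otherEnd s.2 hs.2]
      exact Finset.mem_coe.mpr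
        (Finset.mem_image_of_mem _ (Finset.mem_erase.mpr ⟨heq, hmem⟩))
  · exfalso
    apply h2
    have : (tourStep R T s).1 = s.1 := by
      unfold tourStep
      rw [if_neg hmem]
    rw [this]
    exact h1

lemma visit_back (R : Ribbon inc) (T : Finset (E × V)) (bas : (V ⊕ E) × (E × V))
    (hb : ValidS inc bas)
    (htree : (SimpleGraph.fromEdgeSet (↑(T.image bipSym2) : Set (Sym2 (V ⊕ E)))).IsTree)
    {k : ℕ} {x : V ⊕ E} {q : E × V}
    (hk : (tourStep R T)^[k] bas = (x, q)) (hqT : q ∈ T) :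
    ∃ k₂, (tourStep R T)^[k₂] bas = (otherEnd x q, q) := by
  classical
  obtain ⟨n, hn0, hnp⟩ := exists_period R T hb
  have hvx : ValidS inc ((x, q) : (V ⊕ E) × (E × V)) := hk ▸ validS_iter R T hb k
  set y := otherEnd x q with hy
  set Gq := SimpleGraph.fromEdgeSet (↑((T.erase q).image bipSym2) : Set (Sym2 (V ⊕ E)))
    with hGq
  set S : Set (V ⊕ E) := {a | Gq.Reachable y a} with hSdef
  have hS : ∀ a b, Gq.Adj a b → a ∈ S → b ∈ S := fun a b hab ha => ha.trans hab.reachable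
  have hvx2 : IncTo q x := hvx.2
  have hxy : s(x, y) = bipSym2 q := sym2_otherEnd q hvx2
  have hxS : x ∉ S := by
    intro hxS
    have hadj : (SimpleGraph.fromEdgeSet (↑(T.image bipSym2) : Set (Sym2 (V ⊕ E)))).Adj x y := by
      rw [SimpleGraph.fromEdgeSet_adj]
      exact ⟨by rw [hxy]; exact Finset.mem_coe.mpr (Finset.mem_image_of_mem _ hqT),
        (otherEnd_ne x q).symm⟩
    have hbridge := (SimpleGraph.isAcyclic_iff_forall_adj_isBridge.mp htree.IsAcyclic) hadj
    rw [SimpleGraph.isBridge_iff] at hbridge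
    apply hbridge
    have hle : Gq ≤ (SimpleGraph.fromEdgeSet (↑(T.image bipSym2) : Set (Sym2 (V ⊕ E))) \
        SimpleGraph.fromEdgeSet {s(x, y)}) := by
      intro a b hab
      rw [hGq, SimpleGraph.fromEdgeSet_adj] at hab
      obtain ⟨hmemab, hne⟩ := hab
      simp only [Finset.coe_image, Set.mem_image, Finset.mem_coe] at hmemab
      obtain ⟨q', hq', hq'eq⟩ := hmemab
      rw [Finset.mem_erase] at hq'
      rw [SimpleGraph.sdiff_adj]
      constructor
      · rw [SimpleGraph.fromEdgeSet_adj]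
        refine ⟨?_, hne⟩
        rw [← hq'eq]
        exact Finset.mem_coe.mpr (Finset.mem_image_of_mem _ hq'.2)
      · rw [SimpleGraph.fromEdgeSet_adj]
        rintro ⟨hmem2, -⟩
        rw [Set.mem_singleton_iff] at hmem2
        apply hq'.1
        apply bipSym2_inj
        rw [hq'eq, hmem2, hxy]
    exact ((hxS : Gq.Reachable y x).mono hle).symm
  have hPex : ∃ j, ((tourStep R T)^[k + 1 + j] bas).1 ∉ S := by
    refine ⟨n - 1, ?_⟩
    have hidx : k + 1 + (n - 1) = k + n := by omega
    rw [hidx, Function.iterate_add_apply, hnp, hk]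
    exact hxS
  have hfirst : ((tourStep R T)^[k + 1 + 0] bas).1 ∈ S := by
    have hone : (tourStep R T)^[k + 1 + 0] bas = tourStep R T (x, q) := by
      rw [Nat.add_zero, Function.iterate_succ_apply', hk]
    rw [hone]
    have : (tourStep R T (x, q)).1 = y := by
      unfold tourStep
      rw [if_pos hqT]
    rw [this]
    exact SimpleGraph.Reachable.refl y
  have hj0 : Nat.find hPex ≠ 0 := by
    intro h0
    exact (h0 ▸ Nat.find_spec hPex) hfirst
  obtain ⟨j₁, hj₁⟩ : ∃ j₁, Nat.find hPex = j₁ + 1 := ⟨Nat.find hPex - 1, by omega⟩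
  have hprev : ((tourStep R T)^[k + 1 + j₁] bas).1 ∈ S :=
    not_not.mp (Nat.find_min hPex (by omega))
  have hnext : (tourStep R T ((tourStep R T)^[k + 1 + j₁] bas)).1 ∉ S := by
    have hidx : k + 1 + (j₁ + 1) = (k + 1 + j₁) + 1 := by omega
    have := Nat.find_spec hPex
    rw [hj₁, hidx, Function.iterate_succ_apply'] at this
    exact this
  have hvs : ValidS inc ((tourStep R T)^[k + 1 + j₁] bas) := validS_iter R T hb _
  obtain ⟨h2q, h2T, h2oe⟩ := cross_step R T q S hS hvs hprev hnext
  have hIncS : IncTo q ((tourStep R T)^[k + 1 + j₁] bas).1 := h2q ▸ hvs.2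
  have hs1y : ((tourStep R T)^[k + 1 + j₁] bas).1 = y := by
    rcases hvx2 with hx1 | hx1 <;> rcases hIncS with hs1 | hs1
    · exfalso
      apply hxS
      rw [← hx1] at hs1
      rw [← hs1]
      exact hprev
    · rw [hs1, hy, hx1]
      simp [otherEnd]
    · rw [hs1, hy, hx1]
      simp [otherEnd]
    · exfalso
      apply hxS
      rw [← hx1] at hs1
      rw [← hs1]
      exact hprev
  refine ⟨k + 1 + j₁, ?_⟩
  exact Prod.ext_iff.mpr ⟨hs1y, h2q⟩

lemma visit_next (R : Ribbon inc) (T : Finset (E × V)) (bas : (V ⊕ E) × (E × V))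
    (hb : ValidS inc bas)
    (htree : (SimpleGraph.fromEdgeSet (↑(T.image bipSym2) : Set (Sym2 (V ⊕ E)))).IsTree)
    {k : ℕ} {x : V ⊕ E} {e : E × V}
    (hk : (tourStep R T)^[k] bas = (x, e)) :
    ∃ k', (tourStep R T)^[k'] bas = (x, R.next x e) := by
  have hv : ValidS inc ((x, e) : (V ⊕ E) × (E × V)) := hk ▸ validS_iter R T hb k
  by_cases hmem : e ∈ T
  · obtain ⟨k₂, hk₂⟩ := visit_back R T bas hb htree hk hmem
    refine ⟨k₂ + 1, ?_⟩
    rw [Function.iterate_succ_apply', hk₂]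
    unfold tourStep
    rw [if_pos hmem]
    simp only
    rw [otherEnd_otherEnd e (show IncTo e x from hv.2)]
  · refine ⟨k + 1, ?_⟩
    rw [Function.iterate_succ_apply', hk]
    unfold tourStep
    rw [if_neg hmem]

lemma visit_iter (R : Ribbon inc) (T : Finset (E × V)) (bas : (V ⊕ E) × (E × V))
    (hb : ValidS inc bas)
    (htree : (SimpleGraph.fromEdgeSet (↑(T.image bipSym2) : Set (Sym2 (V ⊕ E)))).IsTree)
    (m : ℕ) :
    ∀ (k : ℕ) (x : V ⊕ E) (e : E × V), (tourStep R T)^[k] bas = (x, e) →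
    ∃ k', (tourStep R T)^[k'] bas = (x, (R.next x)^[m] e) := by
  induction m with
  | zero => intro k x e hk; exact ⟨k, hk⟩
  | succ m ih =>
    intro k x e hk
    obtain ⟨k', hk'⟩ := visit_next R T bas hb htree hk
    obtain ⟨k'', hk''⟩ := ih k' x (R.next x e) hk'
    refine ⟨k'', ?_⟩
    rw [hk'', Function.iterate_succ_apply]

lemma visit_edge (R : Ribbon inc) (T : Finset (E × V)) (bas : (V ⊕ E) × (E × V))
    (hb : ValidS inc bas)
    (htree : (SimpleGraph.fromEdgeSet (↑(T.image bipSym2) : Set (Sym2 (V ⊕ E)))).IsTree)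
    {k : ℕ} {x : V ⊕ E} {e : E × V}
    (hk : (tourStep R T)^[k] bas = (x, e))
    {e' : E × V} (hinc' : inc e'.1 e'.2) (hito : IncTo e' x) :
    ∃ k', (tourStep R T)^[k'] bas = (x, e') := by
  have hv : ValidS inc ((x, e) : (V ⊕ E) × (E × V)) := hk ▸ validS_iter R T hb k
  obtain ⟨m, hm⟩ := R.cyclic x e e' hv.1 hv.2 hinc' hito
  obtain ⟨k', hk'⟩ := visit_iter R T bas hb htree m k x e hk
  exact ⟨k', by rw [hk', hm]⟩

lemma visit_of_adj (R : Ribbon inc) (T : Finset (E × V)) (bas : (V ⊕ E) × (E × V))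
    (hb : ValidS inc bas)
    (htree : (SimpleGraph.fromEdgeSet (↑(T.image bipSym2) : Set (Sym2 (V ⊕ E)))).IsTree)
    (hincT : ∀ r ∈ T, inc r.1 r.2)
    {x y : V ⊕ E}
    (hx : ∃ k, ((tourStep R T)^[k] bas).1 = x)
    (hadj : (SimpleGraph.fromEdgeSet (↑(T.image bipSym2) : Set (Sym2 (V ⊕ E)))).Adj x y) :
    ∃ k, ((tourStep R T)^[k] bas).1 = y := by
  obtain ⟨k, hk⟩ := hx
  rw [SimpleGraph.fromEdgeSet_adj] at hadj
  obtain ⟨hmem, hne⟩ := hadj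
  simp only [Finset.coe_image, Set.mem_image, Finset.mem_coe] at hmem
  obtain ⟨q, hqT, hqeq⟩ := hmem
  have hcases := bipSym2_eq_iff hqeq
  have hito : IncTo q x := by
    rcases hcases with ⟨h1, _⟩ | ⟨h1, _⟩
    · exact Or.inl h1
    · exact Or.inr h1
  have hyoe : y = otherEnd x q := by
    rcases hcases with ⟨h1, h2⟩ | ⟨h1, h2⟩
    · rw [h1, h2]; simp [otherEnd]
    · rw [h1, h2]; simp [otherEnd]
  have hkpair : (tourStep R T)^[k] bas = (x, ((tourStep R T)^[k] bas).2) := by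
    exact Prod.ext_iff.mpr ⟨hk, rfl⟩
  obtain ⟨k', hk'⟩ := visit_edge R T bas hb htree hkpair (hincT q hqT) hito
  refine ⟨k' + 1, ?_⟩
  rw [Function.iterate_succ_apply', hk']
  unfold tourStep
  rw [if_pos hqT]
  simp only
  exact hyoe.symm

lemma visit_walk (R : Ribbon inc) (T : Finset (E × V)) (bas : (V ⊕ E) × (E × V))
    (hb : ValidS inc bas)
    (htree : (SimpleGraph.fromEdgeSet (↑(T.image bipSym2) : Set (Sym2 (V ⊕ E)))).IsTree)
    (hincT : ∀ r ∈ T, inc r.1 r.2)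
    {u a : V ⊕ E}
    (w : (SimpleGraph.fromEdgeSet (↑(T.image bipSym2) : Set (Sym2 (V ⊕ E)))).Walk u a) :
    (∃ k, ((tourStep R T)^[k] bas).1 = u) → ∃ k, ((tourStep R T)^[k] bas).1 = a := by
  induction w with
  | nil => exact id
  | cons hadj w ih => exact fun hu => ih (visit_of_adj R T bas hb htree hincT hu hadj)

lemma visit_node (R : Ribbon inc) (T : Finset (E × V)) (bas : (V ⊕ E) × (E × V))
    (hb : ValidS inc bas)
    (htree : (SimpleGraph.fromEdgeSet (↑(T.image bipSym2) : Set (Sym2 (V ⊕ E)))).IsTree)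
    (hincT : ∀ r ∈ T, inc r.1 r.2)
    (a : V ⊕ E)
    (hreach : (SimpleGraph.fromEdgeSet (↑(T.image bipSym2) : Set (Sym2 (V ⊕ E)))).Reachable
      bas.1 a) :
    ∃ k, ((tourStep R T)^[k] bas).1 = a := by
  obtain ⟨w⟩ := hreach
  exact visit_walk R T bas hb htree hincT w ⟨0, rfl⟩

lemma reach_of_walk {α : Type*} {G H : SimpleGraph α}
    (hedge : ∀ a b, G.Adj a b → H.Reachable a b) {u a : α} (w : G.Walk u a) :
    H.Reachable u a := by
  induction w with
  | nil => exact SimpleGraph.Reachable.refl _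
  | cons h p ih => exact (hedge _ _ h).trans ih

end BernardiTourAux


/-- If `ev ∈ T` with `e` an emerald node in the base component of `T − ev` (the
component of `b₀`), then the tour of `T` reaches every emerald node `f` outside the
base component strictly after it first reaches `e`. -/
theorem base_component_reached_first (R : Ribbon inc)
    (hconn : (bipGraph inc).Connected)
    (bas : (V ⊕ E) × (E × V)) (hbas : IsBasis (inc := inc) bas)
    (T : Finset (E × V)) (hT : IsJaeger R bas T)
    (p : E × V) (hpT : p ∈ T)
    (hbase : (SimpleGraph.fromEdgeSet
        (↑((T.erase p).image bipSym2) : Set (Sym2 (V ⊕ E)))).Reachable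
      (Sum.inr p.1) bas.1) :
    ∀ f : E,
      ¬ (SimpleGraph.fromEdgeSet
          (↑((T.erase p).image bipSym2) : Set (Sym2 (V ⊕ E)))).Reachable
        (Sum.inr f) bas.1 →
      reachedBefore R T bas (Sum.inr p.1) (Sum.inr f) := by
  classical
  intro f hf
  obtain ⟨hincT, htree⟩ := hT.1
  have hb : ValidS inc bas := hbas
  set G' := SimpleGraph.fromEdgeSet (↑((T.erase p).image bipSym2) : Set (Sym2 (V ⊕ E)))
    with hG'
  set Gfull := SimpleGraph.fromEdgeSet (↑(T.image bipSym2) : Set (Sym2 (V ⊕ E)))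
    with hGfull
  have hp2 : ¬ G'.Reachable (Sum.inl p.2) bas.1 := by
    intro hp2
    have hedge : ∀ a b, Gfull.Adj a b → G'.Reachable a b := by
      intro a b hab
      rw [hGfull, SimpleGraph.fromEdgeSet_adj] at hab
      obtain ⟨hmem, hne⟩ := hab
      simp only [Finset.coe_image, Set.mem_image, Finset.mem_coe] at hmem
      obtain ⟨q, hqT, hqeq⟩ := hmem
      by_cases hqp : q = p
      · subst hqp
        rcases bipSym2_eq_iff hqeq with ⟨h1, h2⟩ | ⟨h1, h2⟩
        · rw [h1, h2]; exact hp2.trans hbase.symm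
        · rw [h1, h2]; exact hbase.trans hp2.symm
      · apply SimpleGraph.Adj.reachable
        rw [hG', SimpleGraph.fromEdgeSet_adj]
        refine ⟨?_, hne⟩
        rw [← hqeq]
        exact Finset.mem_coe.mpr
          (Finset.mem_image_of_mem _ (Finset.mem_erase.mpr ⟨hqp, hqT⟩))
    obtain ⟨w⟩ := htree.isConnected.preconnected (Sum.inr f) bas.1
    exact hf (reach_of_walk hedge w)
  obtain ⟨K, hK⟩ := visit_node R T bas hb htree hincT (Sum.inr f)
    (htree.isConnected.preconnected bas.1 (Sum.inr f))
  have hPex : ∃ j, ¬ G'.Reachable (((tourStep R T)^[j] bas).1) bas.1 :=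
    ⟨K, by rw [hK]; exact hf⟩
  have hj0 : Nat.find hPex ≠ 0 := fun h0 =>
    (h0 ▸ Nat.find_spec hPex) (SimpleGraph.Reachable.refl _)
  obtain ⟨j₁, hj₁⟩ : ∃ j₁, Nat.find hPex = j₁ + 1 := ⟨Nat.find hPex - 1, by omega⟩
  have hprev : G'.Reachable (((tourStep R T)^[j₁] bas).1) bas.1 :=
    not_not.mp (Nat.find_min hPex (by omega))
  have hnext : ¬ G'.Reachable ((tourStep R T ((tourStep R T)^[j₁] bas)).1) bas.1 := by
    have hsp := Nat.find_spec hPex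
    rw [hj₁, Function.iterate_succ_apply'] at hsp
    exact hsp
  have hvs : ValidS inc ((tourStep R T)^[j₁] bas) := validS_iter R T hb _
  have hScl : ∀ a b, G'.Adj a b → a ∈ {a | G'.Reachable a bas.1} →
      b ∈ {a | G'.Reachable a bas.1} :=
    fun a b hab ha => hab.symm.reachable.trans ha
  obtain ⟨h2q, h2T, h2oe⟩ :=
    cross_step R T p {a | G'.Reachable a bas.1} hScl hvs hprev hnext
  have hIncS : IncTo p (((tourStep R T)^[j₁] bas)).1 := h2q ▸ hvs.2
  have hs1 : (((tourStep R T)^[j₁] bas)).1 = Sum.inr p.1 := by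
    rcases hIncS with h | h
    · exfalso
      apply hp2
      rw [← h]
      exact hprev
    · exact h
  refine ⟨j₁, hs1, ?_⟩
  intro j hj hcon
  apply hf
  have hr : G'.Reachable (((tourStep R T)^[j] bas).1) bas.1 :=
    not_not.mp (Nat.find_min hPex (by omega))
  rw [← hcon]
  exact hr
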